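/- Fix natural numbers m₁ ≥ 1 and m₂, and set m = m₁ + m₂. Consider the uniform probability distribution on the set of binary strings of length m containing exactly m₁ symbols 'a' and m₂ symbols 'b'. For a natural number k with 1 ≤ k ≤ m₁ and 2·k ≤ m, let s_{1k} denote the number of maximal runs of consecutive a's having length at least k and let E := E[s_{1k}]. Then Var[s_{1k}] = (m₂+1)^{(2)}·m₁^{(2k)} / m^{(2k)} + E·(1 − E), where a^{(j)} denotes the falling factorial a·(a−1)···(a−j+1) with a^{(0)} = 1. -/

import Mathlib

/-!
Write `R w = runsAtLeast m k w`. For any function on a finite set, the variance about the mean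
`E` is `𝔼[R (R - 1)] + E (1 - E)`, so only the second factorial moment has to be computed, and
`R (R - 1) = 2 · C(R, 2)` counts the pairs `i < j` of starting positions of long runs.
Fixing such a pair fixes `2k` letters `a` (the first `k` letters of both runs) and the letters
`b` just before them: one `b` if `i = 0`, two otherwise. The other `m - 2k - 1` or `m - 2k - 2`
letters are free apart from the total count of `a`'s. There are `m - 2k` admissible pairs with
`i = 0` and `C(m - 2k, 2)` with `i > 0`, and summing gives
`∑_w C(R w, 2) = C(m₂ + 1, 2) · C(m - 2k, m₂)`. This equals
`C(m₂ + 1, 2) · m₁^(2k) / m^(2k)` times the number `C(m, m₁)` of strings.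
-/

open Finset

/-- The number of maximal runs of `a`'s (`true`s) of length at least `k` in a
binary string `w` of length `m`: each such run is counted once via its starting
position `i`, i.e. a position with `k` consecutive `true`s from `i` on, whose
predecessor (if any) is `false`. -/
def runsAtLeast (m k : ℕ) (w : Fin m → Bool) : ℕ :=
  (Finset.univ.filter (fun i : Fin m =>
    (i : ℕ) + k ≤ m ∧
    (∀ j : Fin m, (i : ℕ) ≤ (j : ℕ) → (j : ℕ) < (i : ℕ) + k → w j = true) ∧
    (∀ j : Fin m, (j : ℕ) + 1 = (i : ℕ) → w j = false))).card

theorem sum_sq_sub_mean_div_card {ι : Type*} (s : Finset ι) (hs : s.Nonempty) (f : ι → ℝ) :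
    (∑ i ∈ s, (f i - (∑ j ∈ s, f j) / #s) ^ 2) / #s =
      (∑ i ∈ s, f i * (f i - 1)) / #s +
        (∑ j ∈ s, f j) / #s * (1 - (∑ j ∈ s, f j) / #s) := by
  have hcard : (#s : ℝ) ≠ 0 := by simp [hs.ne_empty]
  simp only [sub_sq, mul_sub, mul_one, sum_add_distrib, sum_sub_distrib, ← sum_mul, ← mul_sum,
    sum_const, nsmul_eq_mul]
  field_simp
  ring

theorem mul_choose_pred (n t : ℕ) : n * (n - 1).choose t = n.choose t * (n - t) := by
  cases n with
  | zero => simp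
  | succ n => rw [Nat.add_sub_cancel, mul_comm, Nat.choose_mul_succ_eq]

theorem choose_two_mul_two (n : ℕ) : n.choose 2 * 2 = n * (n - 1) := by
  rw [Nat.choose_two_right, Nat.div_mul_cancel (Nat.even_mul_pred_self n).two_dvd]

theorem mul_choose_pred_add_choose_two_mul (t s : ℕ) :
    (t + s) * (t + s - 1).choose t + (t + s).choose 2 * (t + s - 2).choose t =
      (s + 1).choose 2 * (t + s).choose t := by
  have h1 := mul_choose_pred (t + s) t
  have h2 := mul_choose_pred (t + s - 1) t
  rw [Nat.add_sub_cancel_left] at h1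
  rw [show t + s - 1 - 1 = t + s - 2 by omega, show t + s - 1 - t = s - 1 by omega] at h2
  have h3 := choose_two_mul_two (t + s)
  have h4 := choose_two_mul_two (s + 1)
  apply Nat.eq_of_mul_eq_mul_right two_pos
  rcases s with _ | s
  · linear_combination 2 * h1 + t * h2 + (t + 0 - 2).choose t * h3 - (t + 0).choose t * h4
  · simp only [Nat.add_sub_cancel] at h2 h4
    linear_combination (s + 2) * h1 + (t + s + 1) * h2 + (t + (s + 1) - 2).choose t * h3
      - (t + (s + 1)).choose t * h4

theorem choose_sub_mul_descFactorial (r s j : ℕ) :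
    (r + s - j).choose s * (r + s).descFactorial j = r.descFactorial j * (r + s).choose r := by
  rcases le_or_gt j r with hj | hj
  · have hsymm : (r + s - j).choose s = (r + s - j).choose (r - j) := by
      rw [show r + s - j = r - j + s by omega, Nat.choose_symm_add]
    rw [hsymm, Nat.descFactorial_eq_factorial_mul_choose,
      Nat.descFactorial_eq_factorial_mul_choose]
    linear_combination (j.factorial : ℕ) * (Nat.choose_mul (n := r + s) hj).symm
  · rw [Nat.descFactorial_of_lt hj, zero_mul, Nat.mul_eq_zero]
    by_cases hjs : j ≤ r + s
    · exact .inl (Nat.choose_eq_zero_of_lt (by omega))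
    · exact .inr (Nat.descFactorial_of_lt (by omega))

def fixedWeight (m r : ℕ) : Finset (Fin m → Bool) := {w | #{i | w i = true} = r}

section FixedWeight

variable {m r : ℕ} {T F : Finset (Fin m)}

theorem card_filter_fixedWeight_of_le (hTF : Disjoint T F) (hT : #T ≤ r) :
    #{w ∈ fixedWeight m r | (∀ i ∈ T, w i = true) ∧ ∀ i ∈ F, w i = false} =
      (m - #T - #F).choose (r - #T) := by
  have hfree : #(univ \ (T ∪ F)) = m - #T - #F := by
    rw [card_sdiff_of_subset (subset_univ _), card_union_of_disjoint hTF, card_univ,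
      Fintype.card_fin, Nat.sub_sub]
  rw [← hfree, ← card_powersetCard]
  refine card_nbij' (fun w => ({i | w i = true} : Finset _) \ T) (fun S i => decide (i ∈ T ∪ S))
    (fun w hw => ?_) (fun S hS => ?_) (fun w hw => ?_) (fun S hS => ?_)
  · simp only [fixedWeight, coe_filter, mem_filter, mem_univ, true_and, Set.mem_ofPred_eq,
      mem_coe, mem_powersetCard] at hw ⊢
    obtain ⟨hr, hwT, hwF⟩ := hw
    refine ⟨fun i => ?_, ?_⟩
    · simp only [mem_sdiff, mem_filter, mem_univ, true_and, mem_union]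
      grind
    · rw [card_sdiff_of_subset (fun i hi => by simpa using hwT i hi), hr]
  · simp only [fixedWeight, coe_filter, mem_filter, mem_univ, true_and, Set.mem_ofPred_eq,
      mem_coe, mem_powersetCard, subset_iff, mem_sdiff, mem_union, decide_eq_true_eq,
      decide_eq_false_iff_not] at hS ⊢
    obtain ⟨hSsub, hScard⟩ := hS
    refine ⟨?_, fun i hi => .inl hi, fun i hi => ?_⟩
    · rw [show ({i | i ∈ T ∨ i ∈ S} : Finset _) = T ∪ S by ext; simp,
        card_union_of_disjoint (disjoint_left.2 fun i hiT hiS => hSsub hiS (.inl hiT)), hScard,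
        Nat.add_sub_cancel' hT]
    · grind [disjoint_left]
  · simp only [fixedWeight, coe_filter, mem_filter, mem_univ, true_and, Set.mem_ofPred_eq] at hw
    funext i
    by_cases hi : i ∈ T <;> simp [hi, hw.2.1]
  · simp only [mem_coe, mem_powersetCard, subset_iff, mem_sdiff, mem_univ, mem_union] at hS
    ext i
    simp only [mem_sdiff, mem_filter, mem_univ, true_and, mem_union, decide_eq_true_eq]
    grind

theorem filter_fixedWeight_eq_empty_of_lt (hT : r < #T) :
    {w ∈ fixedWeight m r | (∀ i ∈ T, w i = true) ∧ ∀ i ∈ F, w i = false} = ∅ := by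
  refine filter_eq_empty_iff.2 fun w hw ⟨hwT, _⟩ => hT.not_ge ?_
  rw [fixedWeight, mem_filter] at hw
  exact hw.2 ▸ card_le_card fun i hi => by simpa using hwT i hi

theorem card_filter_fixedWeight (hTF : Disjoint T F) :
    #{w ∈ fixedWeight m r | (∀ i ∈ T, w i = true) ∧ ∀ i ∈ F, w i = false} =
      if #T ≤ r then (m - #T - #F).choose (r - #T) else 0 := by
  split_ifs with hT
  · exact card_filter_fixedWeight_of_le hTF hT
  · rw [filter_fixedWeight_eq_empty_of_lt (not_le.1 hT), card_empty]

theorem card_fixedWeight (m r : ℕ) : #(fixedWeight m r) = m.choose r := by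
  simpa using card_filter_fixedWeight (m := m) (r := r) (disjoint_empty_left ∅)

end FixedWeight

section Runs

variable {m k : ℕ}

def runBlock (k : ℕ) (i : Fin m) : Finset (Fin m) := {j | (i : ℕ) ≤ j ∧ (j : ℕ) < i + k}

def runBoundary (i : Fin m) : Finset (Fin m) := {j | (j : ℕ) + 1 = i}

theorem card_runBlock {i : Fin m} (h : (i : ℕ) + k ≤ m) : #(runBlock k i) = k := by
  have hval : (runBlock k i).map Fin.valEmbedding = Ico (i : ℕ) (i + k) := by
    ext n
    simp only [runBlock, mem_map, mem_filter, mem_univ, true_and, Fin.valEmbedding_apply,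
      mem_Ico]
    exact ⟨fun ⟨j, hj, hjn⟩ => hjn ▸ hj, fun hn => ⟨⟨n, by omega⟩, hn, rfl⟩⟩
  rw [← card_map, hval, Nat.card_Ico, Nat.add_sub_cancel_left]

theorem card_runBoundary (i : Fin m) : #(runBoundary i) = if (i : ℕ) = 0 then 0 else 1 := by
  split_ifs with hi
  · simp [runBoundary, hi]
  · rw [card_eq_one]
    refine ⟨⟨i - 1, by omega⟩, ?_⟩
    ext j
    simp only [runBoundary, mem_filter, mem_univ, true_and, mem_singleton, Fin.ext_iff]
    omega

def IsRunStart (m k : ℕ) (w : Fin m → Bool) (i : Fin m) : Prop :=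
  (i : ℕ) + k ≤ m ∧ (∀ j ∈ runBlock k i, w j = true) ∧ ∀ j ∈ runBoundary i, w j = false

instance (w : Fin m → Bool) : DecidablePred (IsRunStart m k w) := fun _ => by
  unfold IsRunStart; infer_instance

theorem runsAtLeast_eq_card (w : Fin m → Bool) :
    runsAtLeast m k w = #{i | IsRunStart m k w i} := by
  simp [runsAtLeast, IsRunStart, runBlock, runBoundary]

theorem choose_two_runsAtLeast (w : Fin m → Bool) :
    (runsAtLeast m k w).choose 2 =
      #{p : Fin m × Fin m | p.1 < p.2 ∧ IsRunStart m k w p.1 ∧ IsRunStart m k w p.2} := by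
  rw [runsAtLeast_eq_card, ← card_product_filter_lt]
  congr 1
  ext p
  simp only [mem_filter, mem_product, mem_univ, true_and]
  tauto

theorem IsRunStart.add_lt {w : Fin m → Bool} {i j : Fin m} (hi : IsRunStart m k w i)
    (hj : IsRunStart m k w j) (hij : i < j) : (i : ℕ) + k < j := by
  by_contra! h
  have hj' : (j : ℕ) - 1 < m := by omega
  have htrue := hi.2.1 ⟨j - 1, hj'⟩ (by
    simp only [runBlock, mem_filter, mem_univ, true_and]
    omega)
  rw [hj.2.2 ⟨j - 1, hj'⟩ (by
    simp only [runBoundary, mem_filter, mem_univ, true_and]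
    omega)] at htrue
  contradiction

-- A run starting at position `0` has no boundary letter, so only one `false` is forced.
theorem card_filter_isRunStart_pair {r : ℕ} (i j : Fin m) :
    #{w ∈ fixedWeight m r | i < j ∧ IsRunStart m k w i ∧ IsRunStart m k w j} =
      if (i : ℕ) + k < j ∧ (j : ℕ) + k ≤ m then
        if 2 * k ≤ r then (m - 2 * k - if (i : ℕ) = 0 then 1 else 2).choose (r - 2 * k) else 0
      else 0 := by
  by_cases hij : (i : ℕ) + k < j ∧ (j : ℕ) + k ≤ m
  swap
  · rw [if_neg hij, card_eq_zero, filter_eq_empty_iff]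
    rintro w - ⟨hlt, hi, hj⟩
    exact hij ⟨hi.add_lt hj hlt, hj.1⟩
  have hT : #(runBlock k i ∪ runBlock k j) = 2 * k := by
    rw [card_union_of_disjoint, card_runBlock (by omega), card_runBlock hij.2, two_mul]
    simp only [disjoint_left, runBlock, mem_filter, mem_univ, true_and]
    omega
  have hF : #(runBoundary i ∪ runBoundary j) = if (i : ℕ) = 0 then 1 else 2 := by
    rw [card_union_of_disjoint, card_runBoundary i, card_runBoundary j,
      if_neg (show (j : ℕ) ≠ 0 by omega)]
    · split_ifs <;> rfl
    simp only [disjoint_left, runBoundary, mem_filter, mem_univ, true_and]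
    omega
  have hTF : Disjoint (runBlock k i ∪ runBlock k j) (runBoundary i ∪ runBoundary j) := by
    simp only [disjoint_left, runBlock, runBoundary, mem_union, mem_filter, mem_univ, true_and]
    omega
  rw [if_pos hij, ← hT, ← hF, ← card_filter_fixedWeight hTF]
  congr 1
  refine filter_congr fun w _ => ?_
  have hlt : i < j := by rw [Fin.lt_def]; omega
  have hi : (i : ℕ) + k ≤ m := by omega
  simp only [IsRunStart, forall_mem_union, hlt, hi, hij.2, true_and]
  tauto

theorem card_pairs_fst_eq_zero (hk : 1 ≤ k) :
    #{p : Fin m × Fin m | ((p.1 : ℕ) + k < p.2 ∧ (p.2 : ℕ) + k ≤ m) ∧ (p.1 : ℕ) = 0} =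
      m - 2 * k := by
  rw [← Fintype.card_fin (m - 2 * k), ← card_univ]
  symm
  refine card_bij (fun b _ => (⟨0, by have := b.isLt; omega⟩, ⟨b + k + 1, by omega⟩))
    (fun b _ => ?_) (fun a _ b _ h => ?_) (fun p hp => ?_)
  · simp only [mem_filter, mem_univ, true_and, and_true]
    omega
  · simp only [Prod.mk.injEq, Fin.mk.injEq, true_and] at h
    exact Fin.ext (by omega)
  · simp only [mem_filter, mem_univ, true_and] at hp
    refine ⟨⟨p.2 - k - 1, by omega⟩, mem_univ _, Prod.ext (Fin.ext hp.2.symm) (Fin.ext ?_)⟩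
    simp only
    omega

theorem card_pairs_fst_ne_zero (hk : 1 ≤ k) :
    #{p : Fin m × Fin m | ((p.1 : ℕ) + k < p.2 ∧ (p.2 : ℕ) + k ≤ m) ∧ (p.1 : ℕ) ≠ 0} =
      (m - 2 * k).choose 2 := by
  rw [← Fintype.card_fin (m - 2 * k), ← Fintype.card_product_filter_lt]
  symm
  refine card_bij (fun p _ => (⟨p.1 + 1, by omega⟩, ⟨p.2 + k + 1, by omega⟩))
    (fun p hp => ?_) (fun a _ b _ h => ?_) (fun p hp => ?_)
  · simp only [mem_filter, mem_univ, true_and, Fin.lt_def] at hp ⊢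
    omega
  · simp only [Prod.mk.injEq, Fin.mk.injEq] at h
    exact Prod.ext (Fin.ext (by omega)) (Fin.ext (by omega))
  · simp only [mem_filter, mem_univ, true_and] at hp
    refine ⟨(⟨p.1 - 1, by omega⟩, ⟨p.2 - k - 1, by omega⟩), ?_,
      Prod.ext (Fin.ext ?_) (Fin.ext ?_)⟩
    · simp only [mem_filter, mem_univ, true_and, Fin.lt_def]
      omega
    all_goals simp only; omega

theorem sum_choose_two_runsAtLeast {r s : ℕ} (hk : 1 ≤ k) (hm : m = r + s) :
    ∑ w ∈ fixedWeight m r, (runsAtLeast m k w).choose 2 =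
      (s + 1).choose 2 * (m - 2 * k).choose s := by
  have hpairs : ∑ w ∈ fixedWeight m r, (runsAtLeast m k w).choose 2 =
      ∑ p : Fin m × Fin m,
        #{w ∈ fixedWeight m r | p.1 < p.2 ∧ IsRunStart m k w p.1 ∧ IsRunStart m k w p.2} := by
    simp only [choose_two_runsAtLeast, card_filter]
    exact sum_comm
  rw [hpairs]
  simp only [card_filter_isRunStart_pair]
  by_cases h2k : 2 * k ≤ r
  · obtain ⟨t, rfl⟩ : ∃ t, r = 2 * k + t := ⟨r - 2 * k, by omega⟩
    rw [← sum_filter, ← sum_filter_add_sum_filter_not _ (fun p => (p.1 : ℕ) = 0)]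
    simp only [if_pos h2k, filter_filter]
    rw [sum_const_nat fun p hp => by rw [if_pos (mem_filter.1 hp).2.2],
      sum_const_nat fun p hp => by rw [if_neg (mem_filter.1 hp).2.2],
      card_pairs_fst_eq_zero hk, card_pairs_fst_ne_zero hk,
      Nat.add_sub_cancel_left, show m - 2 * k = t + s by omega,
      mul_choose_pred_add_choose_two_mul, Nat.choose_symm_add]
  · simp only [if_neg h2k, ite_self, sum_const_zero]
    rcases s with _ | s
    · simp
    · rw [Nat.choose_eq_zero_of_lt (show m - 2 * k < s + 1 by omega), mul_zero]

end Runs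

theorem runs_variance_general (m₁ m₂ m k : ℕ) (hm : m = m₁ + m₂)
    (hk1 : 1 ≤ k) (hk3 : 2 * k ≤ m)
    (Ω : Finset (Fin m → Bool))
    (hΩ : Ω = Finset.univ.filter
      (fun w => (Finset.univ.filter (fun i => w i = true)).card = m₁))
    (E : ℝ) (hE : E = (∑ w ∈ Ω, (runsAtLeast m k w : ℝ)) / (Ω.card : ℝ)) :
    (∑ w ∈ Ω, ((runsAtLeast m k w : ℝ) - E) ^ 2) / (Ω.card : ℝ) =
      (((m₂ + 1).descFactorial 2 * m₁.descFactorial (2 * k) : ℕ) : ℝ) /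
          (m.descFactorial (2 * k) : ℝ) + E * (1 - E) := by
  obtain rfl : Ω = fixedWeight m m₁ := hΩ
  subst hE
  have hmoment : (∑ w ∈ fixedWeight m m₁, (runsAtLeast m k w).descFactorial 2) *
      m.descFactorial (2 * k) =
        (m₂ + 1).descFactorial 2 * m₁.descFactorial (2 * k) * m.choose m₁ := by
    simp only [Nat.descFactorial_eq_factorial_mul_choose _ 2, ← mul_sum,
      sum_choose_two_runsAtLeast hk1 hm]
    subst hm
    rw [mul_assoc, mul_assoc, choose_sub_mul_descFactorial]
    ring
  have hne : (fixedWeight m m₁).Nonempty := by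
    rw [← card_pos, card_fixedWeight]
    exact Nat.choose_pos (by omega)
  have hD : (m.descFactorial (2 * k) : ℝ) ≠ 0 := by
    simpa [Nat.descFactorial_eq_zero_iff_lt] using hk3
  rw [sum_sq_sub_mean_div_card _ hne]
  congr 1
  rw [div_eq_div_iff (by simp [hne.ne_empty]) hD]
  simp only [← Nat.cast_descFactorial_two, card_fixedWeight]
  exact_mod_cast hmoment

/-- Mood's variance formula for runs (Lemma `LemmaDistributionTheory`):
under the uniform distribution on binary strings of length `m = m₁ + m₂` with
exactly `m₁` symbols `a` (`true`), with `E` the expected number of runs of `a`'s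
of length at least `k` (`1 ≤ k ≤ m₁`, `2k ≤ m`), the variance equals
`(m₂+1)^(2)·m₁^(2k) / m^(2k) + E·(1 − E)` (falling factorials). -/
theorem runs_variance (m₁ m₂ m k : ℕ) (hm₁ : 1 ≤ m₁) (hm : m = m₁ + m₂)
    (hk1 : 1 ≤ k) (hk2 : k ≤ m₁) (hk3 : 2 * k ≤ m)
    (Ω : Finset (Fin m → Bool))
    (hΩ : Ω = Finset.univ.filter
      (fun w => (Finset.univ.filter (fun i => w i = true)).card = m₁))
    (E : ℝ) (hE : E = (∑ w ∈ Ω, (runsAtLeast m k w : ℝ)) / (Ω.card : ℝ)) :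
    (∑ w ∈ Ω, ((runsAtLeast m k w : ℝ) - E) ^ 2) / (Ω.card : ℝ) =
      (((m₂ + 1).descFactorial 2 * m₁.descFactorial (2 * k) : ℕ) : ℝ) /
          (m.descFactorial (2 * k) : ℝ) + E * (1 - E) :=
  runs_variance_general m₁ m₂ m k hm hk1 hk3 Ω hΩ E hE
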